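/- There is no flat tool-level monitor that both allows the benign execution W₁ and blocks the attack execution A₁: for every label λ ∈ {High, Low} and every trust threshold τ_High, either the flat monitor blocks W₁ (a false positive) or it allows A₁ (a false negative). In contrast, the role-aware (L2) monitor with per-argument thresholds τ_recipient^min = USER and τ_body^min = EXTERNAL allows W₁ and blocks A₁. -/
import Mathlib

abbrev TrustLevel := Fin 4

def EXTERNAL : TrustLevel := 0
def TOOL_OUTPUT : TrustLevel := 1
def USER : TrustLevel := 2
def TRUSTED : TrustLevel := 3

inductive Label
  | High
  | Low

def flatBlocks2 (lam : Label) (tauH : TrustLevel) (t1 t2 : TrustLevel) : Prop :=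
  lam = Label.High ∧ (t1 < tauH ∨ t2 < tauH)

def l2Allows2 (m1 m2 : TrustLevel) (t1 t2 : TrustLevel) : Prop :=
  m1 ≤ t1 ∧ m2 ≤ t2

/-- **Separation from flat enforcement.**
    The benign execution W₁ has argument trust levels `(USER, EXTERNAL)` and
    the attack execution A₁ has argument trust levels `(EXTERNAL, EXTERNAL)`.
    Every flat tool-level monitor either blocks W₁ (false positive) or allows
    A₁ (false negative), whereas the role-aware L2 monitor with thresholds
    `τ_recipient^min = USER` and `τ_body^min = EXTERNAL` allows W₁ and
    blocks A₁. -/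
theorem flat_monitor_separation :
    (∀ (lam : Label) (tauH : TrustLevel),
      flatBlocks2 lam tauH USER EXTERNAL ∨ ¬ flatBlocks2 lam tauH EXTERNAL EXTERNAL)
    ∧ l2Allows2 USER EXTERNAL USER EXTERNAL
    ∧ ¬ l2Allows2 USER EXTERNAL EXTERNAL EXTERNAL := by
  refine ⟨?_, ⟨le_refl _, Fin.zero_le _⟩, fun h => by simpa [USER, EXTERNAL] using h.1⟩
  intro lam tauH
  cases lam with
  | Low => right; rintro ⟨h, -⟩; cases h
  | High =>
    rcases Nat.eq_zero_or_pos tauH.val with h | h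
    · right; rintro ⟨-, h1 | h1⟩ <;> simp_all [EXTERNAL, Fin.lt_def]
    · left; exact ⟨rfl, Or.inr (by simp [EXTERNAL, Fin.lt_def, h])⟩
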